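/- arXiv:2103.16527 — 3 statements merged into one kernel-verified Lean document; each statement's English description precedes it below -/
import Mathlib

section
/- Let k and j be integers with 1 ≤ j ≤ k−1, let V be a set of n vertices, let J ⊆ V with |J| = j, let W ⊆ V with J ⊆ W and |W| = w, and let 𝒢 be a family of j-subsets of V. Then the number of k-subsets K of V such that J ⊆ K, (K∖J) ∩ W = ∅, and no member J' of 𝒢 with J' ≠ J satisfies J' ⊆ K, is at least C(n−w, k−j) − Σ_{i=0}^{j−1} C(j,i)·Δ_i(𝒢)·C(n, k−2j+i), where by convention C(n,m) = 0 whenever m < 0. -/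
/-- `Δ_i(𝒢)`: the maximum, over all `i`-subsets `I` of the (finite) vertex set `V`, of the
number of members of `𝒢` containing `I`. -/
def maxDegree {V : Type*} [Fintype V] [DecidableEq V] (𝒢 : Finset (Finset V)) (i : ℕ) : ℕ :=
  (Finset.powersetCard i (Finset.univ : Finset V)).sup fun I =>
    (𝒢.filter fun J => I ⊆ J).card

/-!
The `k`-sets `K ⊇ J` with `K \ J` outside `W` are the sets `J ∪ S` with `S` a `(k - j)`-subset of
`Wᶜ`, so there are `C(n - w, k - j)` of them. Such a set fails the condition only if it contains
`J ∪ J'` for some `J' ∈ 𝒢` other than `J`; if `|J' ∩ J| = i < j`, then `|J ∪ J'| = 2j - i`, so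
at most `C(n, k + i - 2j)` of the `k`-sets contain it. Finally, at most `C(j, i) Δ_i(𝒢)` members
of `𝒢` meet `J` in exactly `i` points, since each contains one of the `C(j, i)` sets `I ⊆ J` of
size `i`, and each such `I` lies in at most `Δ_i(𝒢)` members of `𝒢`.
-/

open Finset

namespace Finset

variable {α : Type*} [DecidableEq α]

lemma card_filter_powersetCard_superset_le (s M : Finset α) (k : ℕ) :
    #{K ∈ s.powersetCard k | M ⊆ K} ≤ if #M ≤ k then (#s).choose (k - #M) else 0 := by
  split_ifs with hM
  · rw [← card_powersetCard]
    refine card_le_card_of_injOn (· \ M) (fun K hK => ?_) (fun K₁ hK₁ K₂ hK₂ h => ?_)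
    · rw [mem_coe, mem_filter, mem_powersetCard] at hK
      rw [mem_coe, mem_powersetCard]
      exact ⟨sdiff_subset.trans hK.1.1, by rw [card_sdiff_of_subset hK.2, hK.1.2]⟩
    · rw [mem_coe, mem_filter] at hK₁ hK₂
      rw [← sdiff_union_of_subset hK₁.2, ← sdiff_union_of_subset hK₂.2]
      exact congrArg (· ∪ M) h
  · refine (card_eq_zero.2 (filter_eq_empty_iff.2 fun K hK hMK => hM ?_)).le
    exact (card_le_card hMK).trans (mem_powersetCard.1 hK).2.le

lemma card_inter_lt_of_card_eq_of_ne {G J : Finset α} (hG : #G = #J) (hne : G ≠ J) :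
    #(G ∩ J) < #J := by
  refine card_lt_card (inter_subset_right.ssubset_of_ne fun h => hne ?_)
  exact (eq_of_subset_of_card_le (inter_eq_right.1 h) hG.le).symm

variable [Fintype α]

-- `[Fintype α]` makes the `∀ J' ∈ 𝒢` clause elaborate with the same (`Fintype`-based)
-- decidability instance as in `count_available_ksets`.
lemma card_filter_le_card_filter_not_superset_add_sum (s 𝒢 : Finset (Finset α)) (J : Finset α)
    (p : Finset α → Prop) [DecidablePred p] :
    #{K ∈ s | J ⊆ K ∧ p K} ≤ #{K ∈ s | J ⊆ K ∧ p K ∧ ∀ J' ∈ 𝒢, J' ≠ J → ¬ J' ⊆ K} +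
      ∑ G ∈ 𝒢.erase J, #{K ∈ s | J ∪ G ⊆ K} := by
  refine (card_le_card fun K hK => ?_).trans <|
    (card_union_le _ _).trans (Nat.add_le_add_left card_biUnion_le _)
  rw [mem_filter] at hK
  by_cases hblocked : ∃ G ∈ 𝒢, G ≠ J ∧ G ⊆ K
  · obtain ⟨G, hG, hne, hGK⟩ := hblocked
    exact mem_union_right _ <| mem_biUnion.2
      ⟨G, mem_erase.2 ⟨hne, hG⟩, mem_filter.2 ⟨hK.1, union_subset hK.2.1 hGK⟩⟩
  · push Not at hblocked
    exact mem_union_left _ (mem_filter.2 ⟨hK.1, hK.2.1, hK.2.2, hblocked⟩)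

lemma choose_card_compl_le_card_filter_powersetCard {J W : Finset α} (hJW : J ⊆ W) {k : ℕ}
    (hk : #J ≤ k) :
    (Fintype.card α - #W).choose (k - #J) ≤
      #{K ∈ powersetCard k univ | J ⊆ K ∧ (K \ J) ∩ W = ∅} := by
  rw [← card_compl, ← card_powersetCard]
  refine card_le_card_of_injOn (· ∪ J) (fun S hS => ?_) (fun S₁ hS₁ S₂ hS₂ h => ?_)
  · rw [mem_coe, mem_powersetCard, subset_compl_iff_disjoint_right] at hS
    have hSJ : Disjoint S J := hS.1.mono_right hJW
    rw [mem_coe, mem_filter, mem_powersetCard, card_union_of_disjoint hSJ, hS.2,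
      union_sdiff_cancel_right hSJ, ← disjoint_iff_inter_eq_empty]
    exact ⟨⟨subset_univ _, Nat.sub_add_cancel hk⟩, subset_union_right, hS.1⟩
  · rw [mem_coe, mem_powersetCard, subset_compl_iff_disjoint_right] at hS₁ hS₂
    rw [← union_sdiff_cancel_right (hS₁.1.mono_right hJW),
      ← union_sdiff_cancel_right (hS₂.1.mono_right hJW)]
    exact congrArg (· \ J) h

lemma card_filter_powersetCard_union_superset_le {J G : Finset α} (hG : #G = #J) (k : ℕ) :
    #{K ∈ powersetCard k univ | J ∪ G ⊆ K} ≤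
      if 2 * #J ≤ k + #(G ∩ J) then (Fintype.card α).choose (k + #(G ∩ J) - 2 * #J) else 0 := by
  have hunion : #(J ∪ G) + #(G ∩ J) = 2 * #J := by
    rw [inter_comm, card_union_add_card_inter, hG, two_mul]
  refine (card_filter_powersetCard_superset_le univ (J ∪ G) k).trans_eq ?_
  split_ifs with h₁ h₂ h₂
  · rw [card_univ]
    congr 1
    omega
  all_goals omega

end Finset

section maxDegree

variable {α : Type*} [Fintype α] [DecidableEq α]

lemma card_filter_superset_le_maxDegree (𝒢 : Finset (Finset α)) {I : Finset α} {i : ℕ}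
    (hI : #I = i) : #{G ∈ 𝒢 | I ⊆ G} ≤ maxDegree 𝒢 i :=
  le_sup (f := fun I => #{G ∈ 𝒢 | I ⊆ G}) (mem_powersetCard.2 ⟨subset_univ I, hI⟩)

lemma card_filter_card_inter_eq_le (𝒢 : Finset (Finset α)) (J : Finset α) (i : ℕ) :
    #{G ∈ 𝒢 | #(G ∩ J) = i} ≤ (#J).choose i * maxDegree 𝒢 i := calc
  #{G ∈ 𝒢 | #(G ∩ J) = i} ≤ #((J.powersetCard i).biUnion fun I => {G ∈ 𝒢 | I ⊆ G}) := by
      refine card_le_card fun G hG => ?_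
      rw [mem_filter] at hG
      exact mem_biUnion.2 ⟨G ∩ J, mem_powersetCard.2 ⟨inter_subset_right, hG.2⟩,
        mem_filter.2 ⟨hG.1, inter_subset_left⟩⟩
  _ ≤ ∑ I ∈ J.powersetCard i, #{G ∈ 𝒢 | I ⊆ G} := card_biUnion_le
  _ ≤ ∑ I ∈ J.powersetCard i, maxDegree 𝒢 i :=
      sum_le_sum fun I hI => card_filter_superset_le_maxDegree 𝒢 (mem_powersetCard.1 hI).2
  _ = (#J).choose i * maxDegree 𝒢 i := by rw [sum_const, card_powersetCard, smul_eq_mul]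

lemma sum_erase_le_sum_maxDegree (𝒢 : Finset (Finset α)) (J : Finset α)
    (h𝒢 : ∀ G ∈ 𝒢, #G = #J) (t : ℕ → ℕ) :
    ∑ G ∈ 𝒢.erase J, t #(G ∩ J) ≤ ∑ i ∈ range #J, (#J).choose i * maxDegree 𝒢 i * t i := by
  have hmaps : ∀ G ∈ 𝒢.erase J, #(G ∩ J) ∈ range #J := fun G hG => mem_range.2 <|
    card_inter_lt_of_card_eq_of_ne (h𝒢 G (mem_of_mem_erase hG)) (ne_of_mem_erase hG)
  rw [← sum_fiberwise_of_maps_to' hmaps]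
  refine sum_le_sum fun i _ => ?_
  rw [sum_const, smul_eq_mul]
  exact Nat.mul_le_mul_right _ <| (card_le_card (filter_subset_filter _ (erase_subset J 𝒢))).trans
    (card_filter_card_inter_eq_le 𝒢 J i)

end maxDegree

theorem count_available_ksets_general
    (k j n w : ℕ) (hjk : j + 1 ≤ k)
    {V : Type*} [Fintype V] [DecidableEq V] (hn : Fintype.card V = n)
    (J W : Finset V) (hJ : J.card = j) (hJW : J ⊆ W) (hW : W.card = w)
    (𝒢 : Finset (Finset V)) (h𝒢 : ∀ G ∈ 𝒢, G.card = j) :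
    ((n - w).choose (k - j) : ℤ) -
        ∑ i ∈ Finset.range j, (j.choose i : ℤ) * (maxDegree 𝒢 i : ℤ) *
          (if 2 * j ≤ k + i then (n.choose (k + i - 2 * j) : ℤ) else 0) ≤
      (((Finset.powersetCard k (Finset.univ : Finset V)).filter fun K =>
        J ⊆ K ∧ (K \ J) ∩ W = ∅ ∧ ∀ J' ∈ 𝒢, J' ≠ J → ¬ J' ⊆ K).card : ℤ) := by
  subst hn hJ hW
  set T : Finset (Finset V) :=
    {K ∈ powersetCard k univ | J ⊆ K ∧ (K \ J) ∩ W = ∅ ∧ ∀ J' ∈ 𝒢, J' ≠ J → ¬ J' ⊆ K}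
  set t : ℕ → ℕ := fun i =>
    if 2 * #J ≤ k + i then (Fintype.card V).choose (k + i - 2 * #J) else 0
  have hbound := calc
    (Fintype.card V - #W).choose (k - #J)
      ≤ #{K ∈ powersetCard k (univ : Finset V) | J ⊆ K ∧ (K \ J) ∩ W = ∅} :=
        choose_card_compl_le_card_filter_powersetCard hJW (by omega)
    _ ≤ #T + ∑ G ∈ 𝒢.erase J, #{K ∈ powersetCard k univ | J ∪ G ⊆ K} :=
        card_filter_le_card_filter_not_superset_add_sum _ 𝒢 J fun K => (K \ J) ∩ W = ∅
    _ ≤ #T + ∑ G ∈ 𝒢.erase J, t #(G ∩ J) :=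
        Nat.add_le_add_left (sum_le_sum fun G hG =>
          card_filter_powersetCard_union_superset_le (h𝒢 G (mem_of_mem_erase hG)) k) _
    _ ≤ #T + ∑ i ∈ range #J, (#J).choose i * maxDegree 𝒢 i * t i :=
        Nat.add_le_add_left (sum_erase_le_sum_maxDegree 𝒢 J h𝒢 t) _
  zify at hbound
  simp only [t, Nat.cast_ite, Nat.cast_zero] at hbound
  linarith

theorem count_available_ksets
    (k j n w : ℕ) (hj1 : 1 ≤ j) (hjk : j + 1 ≤ k)
    {V : Type*} [Fintype V] [DecidableEq V] (hn : Fintype.card V = n)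
    (J W : Finset V) (hJ : J.card = j) (hJW : J ⊆ W) (hW : W.card = w)
    (𝒢 : Finset (Finset V)) (h𝒢 : ∀ G ∈ 𝒢, G.card = j) :
    ((n - w).choose (k - j) : ℤ) -
        ∑ i ∈ Finset.range j, (j.choose i : ℤ) * (maxDegree 𝒢 i : ℤ) *
          (if 2 * j ≤ k + i then (n.choose (k + i - 2 * j) : ℤ) else 0) ≤
      (((Finset.powersetCard k (Finset.univ : Finset V)).filter fun K =>
        J ⊆ K ∧ (K \ J) ∩ W = ∅ ∧ ∀ J' ∈ 𝒢, J' ≠ J → ¬ J' ⊆ K).card : ℤ) :=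
  count_available_ksets_general k j n w hjk hn J W hJ hJW hW 𝒢 h𝒢
end

section
/- Let k and j be integers with 1 ≤ j ≤ k−1 and j > k−j, let a be the unique integer with 1 ≤ a ≤ k−j and a ≡ k (mod k−j), and let r := (j−a)/(k−j) (an integer, equal to ⌈j/(k−j)⌉ − 1, and here r ≥ 1). Let H be a k-uniform hypergraph and let P be a j-tight path in H of length ℓ ≥ r with vertex sequence x_1,…,x_{j+ℓ(k−j)}, and let J := {x_{ℓ(k−j)+1},…,x_{ℓ(k−j)+j}} be its end, with induced partition C₀ := {x_{ℓ(k−j)+1},…,x_{ℓ(k−j)+a}} and C_i := {x_{ℓ(k−j)+a+(i−1)(k−j)+1},…,x_{ℓ(k−j)+a+i(k−j)}} for 1 ≤ i ≤ r. Suppose K is an edge of H with K ∩ {x_1,…,x_{j+ℓ(k−j)}} = J. Then for every a-subset Z of C₁, H contains a j-tight path of length ℓ+1 whose edge set is the edge set of P together with K, whose last k−j vertices are the vertices of K∖J, and whose last j vertices form the set Z ∪ C₂ ∪ ⋯ ∪ C_r ∪ (K∖J). -/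
lemma exists_enum {V : Type*} [DecidableEq V] (v₀ : V) (s : Finset V) :
    ∃ f : ℕ → V, Set.InjOn f (Set.Iio s.card) ∧ (Finset.range s.card).image f = s := by
  classical
  refine ⟨fun n => if h : n < s.card then (s.equivFin.symm ⟨n, h⟩ : V) else v₀, ?_, ?_⟩
  · intro p hp q hq hpq
    simp only [Set.mem_Iio] at hp hq
    simp only [dif_pos hp, dif_pos hq] at hpq
    have h2 := s.equivFin.symm.injective (Subtype.coe_injective hpq)
    simpa using congrArg Fin.val h2
  · apply Finset.Subset.antisymm
    · intro v hv
      simp only [Finset.mem_image] at hv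
      obtain ⟨n, hn, rfl⟩ := hv
      rw [Finset.mem_range] at hn
      rw [dif_pos hn]
      exact (s.equivFin.symm ⟨n, hn⟩).2
    · intro v hv
      refine Finset.mem_image.2 ⟨s.equivFin ⟨v, hv⟩, Finset.mem_range.2 (s.equivFin ⟨v, hv⟩).2, ?_⟩
      rw [dif_pos (s.equivFin ⟨v, hv⟩).2]
      simp

lemma image_Ico_shift {V : Type*} [DecidableEq V] (g : ℕ → V) (b c : ℕ) :
    (Finset.Ico b (b + c)).image (fun n => g (n - b)) = (Finset.range c).image g := by
  ext v
  simp only [Finset.mem_image, Finset.mem_Ico, Finset.mem_range]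
  constructor
  · rintro ⟨n, ⟨h1, h2⟩, rfl⟩
    exact ⟨n - b, by omega, rfl⟩
  · rintro ⟨n, h, rfl⟩
    exact ⟨b + n, ⟨by omega, by omega⟩, by rw [Nat.add_sub_cancel_left]⟩

lemma biUnion_Ico_blocks (c d r : ℕ) (hr : 1 ≤ r) :
    (Finset.Icc 2 r).biUnion (fun i => Finset.Ico (c + (i - 1) * d) (c + i * d))
      = Finset.Ico (c + d) (c + r * d) := by
  induction r, hr using Nat.le_induction with
  | base => simp
  | succ n hn ih =>
    rw [← Finset.Ico_insert_right (show 2 ≤ n+1 by omega), Finset.Ico_add_one_right_eq_Icc,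
      Finset.biUnion_insert, ih]
    have h1 : (n + 1 - 1) * d = n * d := by simp
    rw [h1, Finset.union_comm, Finset.Ico_union_Ico_eq_Ico]
    · have : d ≤ n * d := Nat.le_mul_of_pos_left d (by omega)
      omega
    · have : n * d ≤ (n+1) * d := Nat.mul_le_mul_right d (by omega)
      omega



/-- `x` is the vertex sequence of a `j`-tight path of length `ℓ` in the hypergraph with edge
predicate `E`. -/
def IsPathSeq (k j : ℕ) {V : Type*} [DecidableEq V] (E : Finset V → Prop)
    (x : ℕ → V) (ℓ : ℕ) : Prop :=
  Set.InjOn x (Set.Iio (j + (k - j) * ℓ)) ∧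
    ∀ i < ℓ, E ((Finset.Ico ((k - j) * i) ((k - j) * i + k)).image x)

/-- The edge set of the `j`-tight path of length `ℓ` with vertex sequence `x`. -/
def pathEdges (k j : ℕ) {V : Type*} [DecidableEq V] (x : ℕ → V) (ℓ : ℕ) : Finset (Finset V) :=
  (Finset.range ℓ).image fun i => (Finset.Ico ((k - j) * i) ((k - j) * i + k)).image x

/-- The vertex set of the `j`-tight path of length `ℓ` with vertex sequence `x`. -/
def pathVertices (k j : ℕ) {V : Type*} [DecidableEq V] (x : ℕ → V) (ℓ : ℕ) : Finset V :=
  (Finset.range (j + (k - j) * ℓ)).image x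

/-- The finishing end (last `j` vertices) of a `j`-tight path of length `ℓ` with vertex
sequence `x`. -/
def pathEnd (k j : ℕ) {V : Type*} [DecidableEq V] (x : ℕ → V) (ℓ : ℕ) : Finset V :=
  (Finset.Ico ((k - j) * ℓ) ((k - j) * ℓ + j)).image x

/-- The part `C_i` (for `1 ≤ i`) of the induced partition of the end of the path of length `ℓ`
with vertex sequence `x`: the vertices with (0-indexed) indices
`ℓ(k-j) + a + (i-1)(k-j), …, ℓ(k-j) + a + i(k-j) - 1`. -/
def partBlock (k j a : ℕ) {V : Type*} [DecidableEq V] (x : ℕ → V) (ℓ i : ℕ) : Finset V :=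
  (Finset.Ico (ℓ * (k - j) + a + (i - 1) * (k - j)) (ℓ * (k - j) + a + i * (k - j))).image x

theorem path_extension
    (k j a r : ℕ) (hj1 : 1 ≤ j) (hjk : j + 1 ≤ k) (hjbig : k - j < j)
    (ha1 : 1 ≤ a) (ha2 : a ≤ k - j) (ha3 : a % (k - j) = k % (k - j))
    (hr : r * (k - j) = j - a) (hr1 : 1 ≤ r)
    {V : Type*} [DecidableEq V] (E : Finset V → Prop)
    (ℓ : ℕ) (hℓ : r ≤ ℓ) (x : ℕ → V) (hx : IsPathSeq k j E x ℓ)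
    (K : Finset V) (hKedge : E K) (hKcard : K.card = k)
    (hKint : K ∩ pathVertices k j x ℓ = pathEnd k j x ℓ)
    (Z : Finset V) (hZsub : Z ⊆ partBlock k j a x ℓ 1) (hZcard : Z.card = a) :
    ∃ y : ℕ → V, IsPathSeq k j E y (ℓ + 1) ∧
      pathEdges k j y (ℓ + 1) = pathEdges k j x ℓ ∪ {K} ∧
      (Finset.Ico (j + (k - j) * ℓ) (j + (k - j) * (ℓ + 1))).image y
        = K \ pathEnd k j x ℓ ∧
      pathEnd k j y (ℓ + 1)
        = Z ∪ (Finset.Icc 2 r).biUnion (partBlock k j a x ℓ) ∪ (K \ pathEnd k j x ℓ) := by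
  classical
  obtain ⟨hxinj, hxedge⟩ := hx
  -- abbreviations for the nonlinear arithmetic
  obtain ⟨q, hq⟩ : ∃ q, r * (k - j) = q := ⟨_, rfl⟩
  rw [hq] at hr
  have hdq : k - j ≤ q := by
    calc k - j ≤ r * (k - j) := Nat.le_mul_of_pos_left _ (by omega)
    _ = q := hq
  have haj : a + q = j := by omega
  obtain ⟨M, hM⟩ : ∃ M, (k - j) * ℓ = M := ⟨_, rfl⟩
  have hM' : ℓ * (k - j) = M := by rw [Nat.mul_comm]; exact hM
  have hMq : q ≤ M := by
    calc q = r * (k - j) := hq.symm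
    _ ≤ ℓ * (k - j) := Nat.mul_le_mul_right _ hℓ
    _ = M := hM'
  have hkja : k - j + a ≤ j := by omega
  have hxinj' : Set.InjOn x (Set.Iio (M + j)) := by rwa [hM, Nat.add_comm] at hxinj
  have hVeq : pathVertices k j x ℓ = (Finset.range (M + j)).image x := by
    rw [pathVertices, hM, Nat.add_comm]
  set J := pathEnd k j x ℓ with hJ
  have hJeq : J = (Finset.Ico M (M + j)).image x := by rw [hJ, pathEnd, hM]
  have hcard : ∀ b c : ℕ, c ≤ M + j → ((Finset.Ico b c).image x).card = c - b := by
    intro b c hc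
    rw [Finset.card_image_of_injOn, Nat.card_Ico]
    intro p hp p' hp' hpp
    refine hxinj' ?_ ?_ hpp
    · simp only [Finset.coe_Ico, Set.mem_Ico] at hp; exact Set.mem_Iio.2 (by omega)
    · simp only [Finset.coe_Ico, Set.mem_Ico] at hp'; exact Set.mem_Iio.2 (by omega)
  have hJcard : J.card = j := by rw [hJeq, hcard M (M + j) le_rfl]; omega
  have hJK : J ⊆ K := by rw [← hKint]; exact Finset.inter_subset_left
  have hKJcard : (K \ J).card = k - j := by
    rw [Finset.card_sdiff_of_subset hJK, hKcard, hJcard]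
  have hdisjKJ : ∀ v ∈ K \ J, v ∉ pathVertices k j x ℓ := by
    intro v hv hvP
    rcases Finset.mem_sdiff.1 hv with ⟨hvK, hvJ⟩
    exact hvJ (by rw [← hKint]; exact Finset.mem_inter.2 ⟨hvK, hvP⟩)
  -- the block C₁
  have hC1eq : partBlock k j a x ℓ 1 = (Finset.Ico (M + a) (M + a + (k - j))).image x := by
    rw [partBlock, hM']; norm_num
  set C1 := partBlock k j a x ℓ 1 with hC1
  have hC1card : C1.card = k - j := by
    rw [hC1eq, hcard (M + a) (M + a + (k - j)) (by omega)]; omega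
  set ZC := C1 \ Z with hZC
  have hZCcard : ZC.card = k - j - a := by
    rw [hZC, Finset.card_sdiff_of_subset hZsub, hC1card, hZcard]
  -- enumerations
  obtain ⟨g₁, hg₁inj, hg₁im⟩ := exists_enum (x 0) ZC
  rw [hZCcard] at hg₁inj hg₁im
  obtain ⟨g₂, hg₂inj, hg₂im⟩ := exists_enum (x 0) Z
  rw [hZcard] at hg₂inj hg₂im
  obtain ⟨g₃, hg₃inj, hg₃im⟩ := exists_enum (x 0) (K \ J)
  rw [hKJcard] at hg₃inj hg₃im
  -- the new vertex sequence
  set y : ℕ → V := fun n =>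
    if n < M + a then x n
    else if n < M + (k - j) then g₁ (n - (M + a))
    else if n < M + (k - j) + a then g₂ (n - (M + (k - j)))
    else if n < M + j then x n
    else g₃ (n - (M + j)) with hy
  have hy1 : ∀ n, n < M + a → y n = x n := by
    intro n h; simp only [hy]; rw [if_pos h]
  have hy2 : ∀ n, M + a ≤ n → n < M + (k - j) → y n = g₁ (n - (M + a)) := by
    intro n h1 h2; simp only [hy]; rw [if_neg (by omega), if_pos h2]
  have hy3 : ∀ n, M + (k - j) ≤ n → n < M + (k - j) + a → y n = g₂ (n - (M + (k - j))) := by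
    intro n h1 h2; simp only [hy]; rw [if_neg (by omega), if_neg (by omega), if_pos h2]
  have hy4 : ∀ n, M + (k - j) + a ≤ n → n < M + j → y n = x n := by
    intro n h1 h2; simp only [hy]
    rw [if_neg (by omega), if_neg (by omega), if_neg (by omega), if_pos h2]
  have hy5 : ∀ n, M + j ≤ n → y n = g₃ (n - (M + j)) := by
    intro n h1; simp only [hy]
    rw [if_neg (by omega), if_neg (by omega), if_neg (by omega), if_neg (by omega)]
  -- images of the segments
  have himS2 : (Finset.Ico (M + a) (M + (k - j))).image y = ZC := by
    rw [Finset.image_congr (g := fun n => g₁ (n - (M + a))) (by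
      intro n hn; simp only [Finset.coe_Ico, Set.mem_Ico] at hn; exact hy2 n hn.1 hn.2)]
    rw [show M + (k - j) = (M + a) + (k - j - a) from by omega, image_Ico_shift, hg₁im]
  have himS3 : (Finset.Ico (M + (k - j)) (M + (k - j) + a)).image y = Z := by
    rw [Finset.image_congr (g := fun n => g₂ (n - (M + (k - j)))) (by
      intro n hn; simp only [Finset.coe_Ico, Set.mem_Ico] at hn; exact hy3 n hn.1 hn.2)]
    rw [image_Ico_shift, hg₂im]
  have himS4 : (Finset.Ico (M + (k - j) + a) (M + j)).image y
      = (Finset.Ico (M + (k - j) + a) (M + j)).image x := by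
    apply Finset.image_congr
    intro n hn; simp only [Finset.coe_Ico, Set.mem_Ico] at hn; exact hy4 n hn.1 hn.2
  have himS5 : (Finset.Ico (M + j) (M + j + (k - j))).image y = K \ J := by
    rw [Finset.image_congr (g := fun n => g₃ (n - (M + j))) (by
      intro n hn; simp only [Finset.coe_Ico, Set.mem_Ico] at hn; exact hy5 n hn.1)]
    rw [image_Ico_shift, hg₃im]
  -- the image of the permuted block equals C₁
  have himB : (Finset.Ico (M + a) (M + (k - j) + a)).image y = C1 := by
    rw [← Finset.Ico_union_Ico_eq_Ico (show M + a ≤ M + (k - j) from by omega)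
      (show M + (k - j) ≤ M + (k - j) + a from by omega), Finset.image_union, himS2, himS3,
      hZC, Finset.sdiff_union_of_subset hZsub]
  -- any window that contains the block and lies below M + j has the same image under y and x
  have hwin : ∀ W : Finset ℕ, (∀ n ∈ W, n < M + j) →
      Finset.Ico (M + a) (M + (k - j) + a) ⊆ W → W.image y = W.image x := by
    intro W hWlt hBW
    have h1 : W = (W \ Finset.Ico (M + a) (M + (k - j) + a))
        ∪ Finset.Ico (M + a) (M + (k - j) + a) := (Finset.sdiff_union_of_subset hBW).symm
    rw [h1, Finset.image_union, Finset.image_union]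
    congr 1
    · apply Finset.image_congr
      intro n hn
      simp only [Finset.coe_sdiff, Set.mem_diff, Finset.mem_coe, Finset.coe_Ico,
        Set.mem_Ico, not_and, not_le, not_lt] at hn
      rcases hn with ⟨hnW, hn2⟩
      by_cases hlow : n < M + a
      · exact hy1 n hlow
      · exact hy4 n (by omega) (hWlt n hnW)
    · rw [himB, hC1eq, show M + a + (k - j) = M + (k - j) + a from by omega]
  -- all old edges are preserved
  have hedge : ∀ i, i < ℓ → (Finset.Ico ((k - j) * i) ((k - j) * i + k)).image y
      = (Finset.Ico ((k - j) * i) ((k - j) * i + k)).image x := by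
    intro i hi
    obtain ⟨w, hw⟩ : ∃ w, (k - j) * i = w := ⟨_, rfl⟩
    rw [hw]
    by_cases hcase : i + r < ℓ
    · -- window lies entirely below the block
      have h1 : (k - j) * (i + 1 + r) ≤ (k - j) * ℓ := Nat.mul_le_mul_left _ (by omega)
      have h2 : (k - j) * (i + 1 + r) = w + (k - j) + q := by
        rw [Nat.mul_add, Nat.mul_add, Nat.mul_one, hw, Nat.mul_comm, hq]
      rw [hM] at h1
      have hend : w + k ≤ M + a := by omega
      apply Finset.image_congr
      intro n hn; simp only [Finset.coe_Ico, Set.mem_Ico] at hn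
      exact hy1 n (by omega)
    · -- window contains the full block
      have h1 : (k - j) * ℓ ≤ (k - j) * (i + r) := Nat.mul_le_mul_left _ (by omega)
      have h2 : (k - j) * (i + r) = w + q := by rw [Nat.mul_add, hw, Nat.mul_comm, hq]
      have h3 : (k - j) * i ≤ (k - j) * ℓ := Nat.mul_le_mul_left _ (by omega)
      have h4 : (k - j) * (i + 1) ≤ (k - j) * ℓ := Nat.mul_le_mul_left _ (by omega)
      have h5 : (k - j) * (i + 1) = w + (k - j) := by rw [Nat.mul_add, Nat.mul_one, hw]
      rw [hM] at h1 h3 h4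
      rw [hw] at h3
      apply hwin
      · intro n hn; simp only [Finset.mem_Ico] at hn; omega
      · intro n hn; simp only [Finset.mem_Ico] at hn ⊢; omega
  -- the new edge is K
  have himK : (Finset.Ico M (M + k)).image y = K := by
    rw [← Finset.Ico_union_Ico_eq_Ico (show M ≤ M + j from by omega)
      (show M + j ≤ M + k from by omega), Finset.image_union]
    rw [show M + k = M + j + (k - j) from by omega, himS5]
    rw [hwin (Finset.Ico M (M + j)) (by intro n hn; simp only [Finset.mem_Ico] at hn; omega)
      (by intro n hn; simp only [Finset.mem_Ico] at hn ⊢; omega), ← hJeq]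
    exact Finset.union_sdiff_of_subset hJK
  have hmul : (k - j) * (ℓ + 1) = M + (k - j) := by rw [Nat.mul_add, hM, Nat.mul_one]
  -- the full vertex image
  have himall : (Finset.range (M + j + (k - j))).image y = pathVertices k j x ℓ ∪ (K \ J) := by
    rw [Finset.range_eq_Ico, ← Finset.Ico_union_Ico_eq_Ico (show 0 ≤ M + j from by omega)
      (show M + j ≤ M + j + (k - j) from by omega), Finset.image_union, himS5]
    rw [hwin (Finset.Ico 0 (M + j)) (by intro n hn; simp only [Finset.mem_Ico] at hn; omega)
      (by intro n hn; simp only [Finset.mem_Ico] at hn ⊢; omega)]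
    rw [hVeq, Finset.range_eq_Ico]
  have hVcard : (pathVertices k j x ℓ).card = M + j := by
    rw [hVeq, Finset.card_image_of_injOn (by
      intro p hp p' hp' hpp
      refine hxinj' ?_ ?_ hpp
      · simp only [Finset.coe_range, Set.mem_Iio] at hp; exact hp
      · simp only [Finset.coe_range, Set.mem_Iio] at hp'; exact hp'), Finset.card_range]
  have hdisj' : Disjoint (pathVertices k j x ℓ) (K \ J) :=
    Finset.disjoint_right.2 fun v hv hv2 => hdisjKJ v hv hv2
  refine ⟨y, ⟨?_, ?_⟩, ?_, ?_, ?_⟩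
  · -- injectivity
    have he : j + (k - j) * (ℓ + 1) = M + j + (k - j) := by rw [hmul]; omega
    have hset : Set.Iio (j + (k - j) * (ℓ + 1)) = Set.Iio (M + j + (k - j)) := by rw [he]
    rw [hset, ← Finset.coe_range]
    refine Finset.card_image_iff.1 ?_
    rw [himall, Finset.card_union_of_disjoint hdisj', hVcard, hKJcard, Finset.card_range]
  · -- edges
    intro i hi
    rcases Nat.lt_or_ge i ℓ with hilt | hige
    · rw [hedge i hilt]; exact hxedge i hilt
    · have hieq : i = ℓ := by omega
      subst hieq
      rw [hM, himK]
      exact hKedge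
  · -- new edges are old edges plus K
    rw [pathEdges, pathEdges, Finset.range_add_one, Finset.image_insert, hM, himK,
      Finset.image_congr (g := fun i => (Finset.Ico ((k - j) * i) ((k - j) * i + k)).image x)
        (by intro i hi; simp only [Finset.coe_range, Set.mem_Iio] at hi; exact hedge i hi),
      Finset.union_comm]
    rw [Finset.insert_eq]
  · -- the new k - j vertices
    rw [hM, hmul, show j + M = M + j from by omega, show j + (M + (k - j)) = M + j + (k - j) from by omega,
      himS5]
  · -- the new end
    rw [pathEnd, hmul]
    rw [show M + (k - j) + j = M + j + (k - j) from by omega]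
    rw [← Finset.Ico_union_Ico_eq_Ico (show M + (k - j) ≤ M + j from by omega)
      (show M + j ≤ M + j + (k - j) from by omega), Finset.image_union, himS5]
    rw [← Finset.Ico_union_Ico_eq_Ico (show M + (k - j) ≤ M + (k - j) + a from by omega)
      (show M + (k - j) + a ≤ M + j from by omega), Finset.image_union, himS3, himS4]
    have hbi : (Finset.Icc 2 r).biUnion (partBlock k j a x ℓ)
        = (Finset.Ico (M + (k - j) + a) (M + j)).image x := by
      have hpb : (Finset.Icc 2 r).biUnion (partBlock k j a x ℓ)
          = ((Finset.Icc 2 r).biUnion fun i =>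
              Finset.Ico (M + a + (i - 1) * (k - j)) (M + a + i * (k - j))).image x := by
        rw [Finset.biUnion_image]
        apply Finset.biUnion_congr rfl
        intro i _
        rw [partBlock, hM']
      rw [hpb, biUnion_Ico_blocks (M + a) (k - j) r hr1, hq,
        show M + a + (k - j) = M + (k - j) + a from by omega,
        show M + a + q = M + j from by omega]
    rw [hbi]
end

section
/- Let k and j be integers with 2 ≤ j ≤ k−1, let a be the unique integer with 1 ≤ a ≤ k−j and a ≡ k (mod k−j), and set s := ⌈j/(k−j)⌉ and b := k−j−a. Let P be a j-tight path of length ℓ ≥ k on vertex set V(P) (so |V(P)| = j + ℓ(k−j)), and let R be a set of b vertices disjoint from V(P). Then there exist s many k-subsets K_1,…,K_s of V(P) ∪ R such that the edge set of P together with {K_1,…,K_s} is the edge set of a j-tight cycle of length ℓ+s with vertex set V(P) ∪ R. -/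
/-- The edge set of the `j`-tight cycle of length `ℓ` with vertex sequence `z`
(indices read modulo `(k-j)ℓ`). -/
def cycleEdges (k j : ℕ) {V : Type*} [DecidableEq V] (z : ℕ → V) (ℓ : ℕ) : Finset (Finset V) :=
  (Finset.range ℓ).image fun i =>
    (Finset.Ico ((k - j) * i) ((k - j) * i + k)).image (fun m => z (m % ((k - j) * ℓ)))

/-- The vertex set of the `j`-tight cycle of length `ℓ` with vertex sequence `z`. -/
def cycleVertices (k j : ℕ) {V : Type*} [DecidableEq V] (z : ℕ → V) (ℓ : ℕ) : Finset V :=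
  (Finset.range ((k - j) * ℓ)).image z

lemma mod_inj_aux {N k p m1 m2 : ℕ} (hk : k ≤ N)
    (h1 : m1 ∈ Finset.Ico p (p + k)) (h2 : m2 ∈ Finset.Ico p (p + k))
    (h : m1 % N = m2 % N) : m1 = m2 := by
  simp only [Finset.mem_Ico] at h1 h2
  rcases le_total m1 m2 with hle | hle
  · have hd := (Nat.modEq_iff_dvd' hle).mp h
    have := Nat.eq_zero_of_dvd_of_lt hd (show m2 - m1 < N by omega)
    omega
  · have hd := (Nat.modEq_iff_dvd' hle).mp h.symm
    have := Nat.eq_zero_of_dvd_of_lt hd (show m1 - m2 < N by omega)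
    omega

theorem close_path_to_cycle
    (k j a s b : ℕ) (hj2 : 2 ≤ j) (hjk : j + 1 ≤ k)
    (ha1 : 1 ≤ a) (ha2 : a ≤ k - j) (ha3 : a % (k - j) = k % (k - j))
    (hs : (s : ℤ) = ⌈(j : ℚ) / ((k : ℚ) - (j : ℚ))⌉) (hb : b = k - j - a)
    {V : Type*} [DecidableEq V]
    (ℓ : ℕ) (hℓ : k ≤ ℓ) (x : ℕ → V) (hx : Set.InjOn x (Set.Iio (j + (k - j) * ℓ)))
    (R : Finset V) (hR : R.card = b) (hdisj : Disjoint R (pathVertices k j x ℓ)) :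
    ∃ K : Fin s → Finset V, Function.Injective K ∧
      (∀ i, (K i).card = k) ∧ (∀ i, K i ⊆ pathVertices k j x ℓ ∪ R) ∧
      ∃ z : ℕ → V, Set.InjOn z (Set.Iio ((k - j) * (ℓ + s))) ∧
        cycleEdges k j z (ℓ + s) = pathEdges k j x ℓ ∪ Finset.image K Finset.univ ∧
        cycleVertices k j z (ℓ + s) = pathVertices k j x ℓ ∪ R := by
  have hd1 : 1 ≤ k - j := by omega
  -- ### the key arithmetic identity `(k-j)*s = j + b`
  have hds : (k - j) * s = j + b := by
    have hd0 : (0:ℚ) < (k:ℚ) - j := by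
      have : (j:ℚ) + 1 ≤ k := by exact_mod_cast hjk
      linarith
    have hcast : ((k - j : ℕ):ℚ) = (k:ℚ) - j := by
      push_cast [Nat.cast_sub (show j ≤ k by omega)]; ring
    have h1 : (j:ℚ)/((k:ℚ)-j) ≤ (s:ℚ) := by
      have h := Int.le_ceil ((j:ℚ)/((k:ℚ)-j))
      rw [← hs] at h
      exact_mod_cast h
    have h2 : (s:ℚ) < (j:ℚ)/((k:ℚ)-j) + 1 := by
      have h := Int.ceil_lt_add_one ((j:ℚ)/((k:ℚ)-j))
      rw [← hs] at h
      exact_mod_cast h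
    have hsd1 : j ≤ (k - j) * s := by
      have h3 := (div_le_iff₀ hd0).mp h1
      have h4 : (j:ℚ) ≤ (s:ℚ) * ((k-j:ℕ):ℚ) := by rw [hcast]; exact h3
      rw [Nat.mul_comm]
      exact_mod_cast h4
    have hsd2 : (k - j) * s < j + (k - j) := by
      have h3 : ((s:ℚ) - 1) * ((k:ℚ)-j) < j := by
        have := (lt_div_iff₀ hd0).mp (by linarith : (s:ℚ) - 1 < (j:ℚ)/((k:ℚ)-j))
        linarith
      have h4 : (s:ℚ) * ((k-j:ℕ):ℚ) < (j:ℚ) + ((k-j:ℕ):ℚ) := by rw [hcast]; nlinarith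
      rw [Nat.mul_comm]
      exact_mod_cast h4
    have hkmod : k % (k - j) = j % (k - j) := by
      have h := Nat.add_mod_left (k - j) j
      rw [show k - j + j = k by omega] at h
      exact h
    have ha3' : a % (k - j) = j % (k - j) := ha3.trans hkmod
    have e2 : (j + b) % (k - j) = 0 := by
      rcases eq_or_lt_of_le ha2 with h | h
      · have hb0 : b = 0 := by omega
        have hj0 : j % (k - j) = 0 := by rw [← ha3', h, Nat.mod_self]
        rw [hb0, Nat.add_zero, hj0]
      · have hja : j % (k - j) = a := by rw [← ha3', Nat.mod_eq_of_lt h]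
        rw [Nat.add_mod, hja, Nat.mod_eq_of_lt (show b < k - j by omega),
          show a + b = k - j by omega, Nat.mod_self]
    obtain ⟨c, hc⟩ := Nat.dvd_of_mod_eq_zero e2
    have hbd : b < k - j := by omega
    rcases lt_trichotomy s c with h | h | h
    · have := Nat.mul_le_mul_left (k - j) (Nat.succ_le_of_lt h)
      rw [Nat.mul_succ] at this
      omega
    · rw [h]; omega
    · have := Nat.mul_le_mul_left (k - j) (Nat.succ_le_of_lt h)
      rw [Nat.mul_succ] at this
      omega
  -- ### basic size facts
  have hbkj : b ≤ k - j := by omega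
  have hs1 : 1 ≤ s := by
    rcases Nat.eq_zero_or_pos s with h | h
    · rw [h, Nat.mul_zero] at hds; omega
    · exact h
  have hMN : (k - j) * (ℓ + s) = (j + (k - j) * ℓ) + b := by
    rw [Nat.mul_add, hds]; omega
  have hlM : ℓ ≤ (k - j) * ℓ := Nat.le_mul_of_pos_left ℓ (by omega)
  have hkN : k ≤ (k - j) * (ℓ + s) := by omega
  have hNpos : 0 < (k - j) * (ℓ + s) := by omega
  -- ### an enumeration of R
  obtain ⟨y, hyinj, hymem, hysurj⟩ :
      ∃ y : ℕ → V, (∀ i1 < b, ∀ i2 < b, y i1 = y i2 → i1 = i2) ∧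
        (∀ i < b, y i ∈ R) ∧ (∀ v ∈ R, ∃ i < b, y i = v) := by
    refine ⟨fun i => if h : i < b then
      ((R.equivFin.symm (Fin.cast hR.symm ⟨i, h⟩)) : { v // v ∈ R }).1 else x 0, ?_, ?_, ?_⟩
    · intro i1 h1 i2 h2 h
      simp only [dif_pos h1, dif_pos h2] at h
      have h' := R.equivFin.symm.injective (Subtype.coe_injective h)
      exact congrArg Fin.val (Fin.cast_injective _ h')
    · intro i h
      simp only [dif_pos h]
      exact (R.equivFin.symm _).2
    · intro v hv
      refine ⟨(R.equivFin ⟨v, hv⟩).val, by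
        have := (R.equivFin ⟨v, hv⟩).2; omega, ?_⟩
      have hlt : (R.equivFin ⟨v, hv⟩).val < b := by
        have := (R.equivFin ⟨v, hv⟩).2; omega
      simp only [dif_pos hlt]
      have : Fin.cast hR.symm ⟨(R.equivFin ⟨v, hv⟩).val, hlt⟩ = R.equivFin ⟨v, hv⟩ := by
        apply Fin.ext; rfl
      rw [this, Equiv.symm_apply_apply]
  -- ### the cyclic vertex sequence
  set z : ℕ → V := fun m =>
    if m < j + (k - j) * ℓ then x m else y (m - (j + (k - j) * ℓ)) with hzdef
  have hzx : ∀ m, m < j + (k - j) * ℓ → z m = x m := by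
    intro m hm; rw [hzdef]; simp only [if_pos hm]
  have hzy : ∀ m, ¬ m < j + (k - j) * ℓ → z m = y (m - (j + (k - j) * ℓ)) := by
    intro m hm; rw [hzdef]; simp only [if_neg hm]
  have hzPV : ∀ m, m < j + (k - j) * ℓ → z m ∈ pathVertices k j x ℓ := by
    intro m hm
    rw [hzx m hm]
    simp only [pathVertices, Finset.mem_image]
    exact ⟨m, Finset.mem_range.mpr hm, rfl⟩
  have hzR : ∀ m, ¬ m < j + (k - j) * ℓ → m < (k - j) * (ℓ + s) → z m ∈ R := by
    intro m hm hmN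
    rw [hzy m hm]
    exact hymem _ (by omega)
  have hzinj : ∀ m1, m1 < (k - j) * (ℓ + s) → ∀ m2, m2 < (k - j) * (ℓ + s) →
      z m1 = z m2 → m1 = m2 := by
    intro m1 hm1 m2 hm2 h
    by_cases c1 : m1 < j + (k - j) * ℓ <;> by_cases c2 : m2 < j + (k - j) * ℓ
    · rw [hzx m1 c1, hzx m2 c2] at h
      exact hx (Set.mem_Iio.mpr c1) (Set.mem_Iio.mpr c2) h
    · have h1 := hzPV m1 c1
      have h2 := hzR m2 c2 hm2
      rw [h] at h1
      exact absurd h1 (Finset.disjoint_left.mp hdisj h2)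
    · have h1 := hzPV m2 c2
      have h2 := hzR m1 c1 hm1
      rw [← h] at h1
      exact absurd h1 (Finset.disjoint_left.mp hdisj h2)
    · rw [hzy m1 c1, hzy m2 c2] at h
      have := hyinj _ (by omega) _ (by omega) h
      omega
  have hzmem : ∀ m, m < (k - j) * (ℓ + s) → z m ∈ pathVertices k j x ℓ ∪ R := by
    intro m hm
    by_cases c : m < j + (k - j) * ℓ
    · exact Finset.mem_union_left _ (hzPV m c)
    · exact Finset.mem_union_right _ (hzR m c hm)
  -- injectivity of m ↦ z (m % N) on blocks of length k
  have hwinj : ∀ p m1, m1 ∈ Finset.Ico p (p + k) → ∀ m2, m2 ∈ Finset.Ico p (p + k) →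
      z (m1 % ((k - j) * (ℓ + s))) = z (m2 % ((k - j) * (ℓ + s))) → m1 = m2 := by
    intro p m1 h1 m2 h2 h
    exact mod_inj_aux hkN h1 h2
      (hzinj _ (Nat.mod_lt _ hNpos) _ (Nat.mod_lt _ hNpos) h)
  refine ⟨fun i => (Finset.Ico ((k - j) * (ℓ + i.1)) ((k - j) * (ℓ + i.1) + k)).image
      (fun m => z (m % ((k - j) * (ℓ + s)))), ?_, ?_, ?_, z, ?_, ?_, ?_⟩
  · -- injectivity of K
    have hstart : ∀ i : Fin s, (k - j) * (ℓ + i.1) < (k - j) * (ℓ + s) := by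
      intro i
      exact (Nat.mul_lt_mul_left (by omega)).mpr (by omega)
    have hKmem : ∀ i : Fin s, z ((k - j) * (ℓ + i.1)) ∈
        (Finset.Ico ((k - j) * (ℓ + i.1)) ((k - j) * (ℓ + i.1) + k)).image
          (fun m => z (m % ((k - j) * (ℓ + s)))) := by
      intro i
      refine Finset.mem_image.mpr ⟨(k - j) * (ℓ + i.1), Finset.mem_Ico.mpr ⟨le_refl _, by omega⟩, ?_⟩
      rw [Nat.mod_eq_of_lt (hstart i)]
    have hKnot : ∀ i1 i2 : Fin s, i1.1 < i2.1 → z ((k - j) * (ℓ + i1.1)) ∉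
        (Finset.Ico ((k - j) * (ℓ + i2.1)) ((k - j) * (ℓ + i2.1) + k)).image
          (fun m => z (m % ((k - j) * (ℓ + s)))) := by
      intro i1 i2 h12 hmem
      obtain ⟨m, hm, heq⟩ := Finset.mem_image.mp hmem
      rw [Finset.mem_Ico] at hm
      have hp12 : (k - j) * (ℓ + i1.1) < (k - j) * (ℓ + i2.1) :=
        (Nat.mul_lt_mul_left (by omega)).mpr (by omega)
      have hp2N : (k - j) * (ℓ + i2.1) + (k - j) ≤ (k - j) * (ℓ + s) := by
        have h5 := Nat.mul_le_mul_left (k - j) (show ℓ + i2.1 + 1 ≤ ℓ + s by omega)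
        rw [Nat.mul_succ] at h5
        exact h5
      have hkp1 : k ≤ (k - j) * (ℓ + i1.1) := by
        have h6 := Nat.mul_le_mul_left (k - j) (show ℓ ≤ ℓ + i1.1 by omega)
        omega
      have hmN : m % ((k - j) * (ℓ + s)) = (k - j) * (ℓ + i1.1) :=
        hzinj _ (Nat.mod_lt _ hNpos) _ (hstart i1) heq
      by_cases hc : m < (k - j) * (ℓ + s)
      · rw [Nat.mod_eq_of_lt hc] at hmN
        omega
      · push_neg at hc
        rw [Nat.mod_eq_sub_mod hc, Nat.mod_eq_of_lt (by omega)] at hmN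
        omega
    intro i1 i2 heq
    have heq' : (Finset.Ico ((k - j) * (ℓ + i1.1)) ((k - j) * (ℓ + i1.1) + k)).image
        (fun m => z (m % ((k - j) * (ℓ + s)))) =
        (Finset.Ico ((k - j) * (ℓ + i2.1)) ((k - j) * (ℓ + i2.1) + k)).image
        (fun m => z (m % ((k - j) * (ℓ + s)))) := heq
    by_contra hne
    have hne' : i1.1 ≠ i2.1 := fun h => hne (Fin.ext h)
    rcases Nat.lt_or_ge i1.1 i2.1 with h | h
    · exact hKnot i1 i2 h (heq' ▸ hKmem i1)
    · exact hKnot i2 i1 (by omega) (heq'.symm ▸ hKmem i2)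
  · -- cardinality of each K i
    intro i
    rw [Finset.card_image_of_injOn, Nat.card_Ico]
    · omega
    · intro m1 h1 m2 h2 h
      exact hwinj _ m1 (Finset.mem_coe.mp h1) m2 (Finset.mem_coe.mp h2) h
  · -- each K i lies in V(P) ∪ R
    intro i v hv
    obtain ⟨m, hm, rfl⟩ := Finset.mem_image.mp hv
    exact hzmem _ (Nat.mod_lt _ hNpos)
  · -- injectivity of z
    intro m1 h1 m2 h2 h
    exact hzinj m1 (Set.mem_Iio.mp h1) m2 (Set.mem_Iio.mp h2) h
  · -- the edge sets agree
    have hedge : ∀ i, i < ℓ →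
        (Finset.Ico ((k - j) * i) ((k - j) * i + k)).image
          (fun m => z (m % ((k - j) * (ℓ + s)))) =
        (Finset.Ico ((k - j) * i) ((k - j) * i + k)).image x := by
      intro i hi
      apply Finset.image_congr
      intro m hm
      simp only [Finset.coe_Ico, Set.mem_Ico] at hm
      have h1 : (k - j) * i + k ≤ j + (k - j) * ℓ := by
        have h5 := Nat.mul_le_mul_left (k - j) (show i + 1 ≤ ℓ by omega)
        rw [Nat.mul_succ] at h5
        omega
      show z (m % ((k - j) * (ℓ + s))) = x m
      rw [Nat.mod_eq_of_lt (by omega)]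
      exact hzx m (by omega)
    ext E
    simp only [cycleEdges, pathEdges, Finset.mem_union, Finset.mem_image, Finset.mem_range,
      Finset.mem_univ, true_and]
    constructor
    · rintro ⟨i, hi, rfl⟩
      by_cases hiℓ : i < ℓ
      · exact Or.inl ⟨i, hiℓ, (hedge i hiℓ).symm⟩
      · refine Or.inr ⟨⟨i - ℓ, by omega⟩, ?_⟩
        simp only
        rw [show ℓ + (i - ℓ) = i by omega]
    · rintro (⟨i, hi, rfl⟩ | ⟨i, rfl⟩)
      · exact ⟨i, by omega, hedge i hi⟩
      · exact ⟨ℓ + i.1, by omega, rfl⟩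
  · -- the vertex sets agree
    ext v
    simp only [cycleVertices, Finset.mem_image, Finset.mem_range, Finset.mem_union]
    constructor
    · rintro ⟨m, hm, rfl⟩
      by_cases c : m < j + (k - j) * ℓ
      · exact Or.inl (hzPV m c)
      · exact Or.inr (hzR m c hm)
    · rintro (hPV | hr)
      · simp only [pathVertices, Finset.mem_image, Finset.mem_range] at hPV
        obtain ⟨m, hm, rfl⟩ := hPV
        exact ⟨m, by omega, hzx m hm⟩
      · obtain ⟨i, hib, hyi⟩ := hysurj v hr
        refine ⟨j + (k - j) * ℓ + i, by omega, ?_⟩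
        rw [hzy _ (by omega)]
        rw [show j + (k - j) * ℓ + i - (j + (k - j) * ℓ) = i by omega]
        exact hyi
end
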